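/- Let $p \ge 1$, $\theta > 2$, $v > 0$, let $k_1, \dots, k_p > 0$, let $\xi_1, \dots, \xi_p \ge 0$ with not all $\xi_i$ zero, and let $m > 0$. Set $r = \theta/(\theta+2)$ and $q = \theta/(\theta-2)$. Then the infimum of $\sum_{i=1}^p v \left(\frac{1}{2} c_i^2 k_i\right)^{r}$ over all $(c_1,\dots,c_p) \in \mathbb{R}^p$ satisfying $\sum_{i=1}^p \xi_i c_i k_i = m$ equals $v \left[\frac{1}{2}\frac{m^2}{\left(\sum_{j=1}^p \xi_j^{2q} k_j^{q}\right)^{1/q}}\right]^{r}$, and it is attained at $c_i = m \, \frac{\xi_i^{(\theta+2)/(\theta-2)} k_i^{2/(\theta-2)}}{\sum_{j=1}^p \xi_j^{2\theta/(\theta-2)} k_j^{\theta/(\theta-2)}}$. -/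

import Mathlib

theorem stmt_7 (p : ℕ) (hp : 1 ≤ p) (θ v : ℝ) (hθ : 2 < θ) (hv : 0 < v)
    (k ξ : Fin p → ℝ) (hk : ∀ i, 0 < k i) (hξ : ∀ i, 0 ≤ ξ i) (hξ0 : ∃ i, ξ i ≠ 0)
    (m : ℝ) (hm : 0 < m)
    (r q : ℝ) (hr : r = θ/(θ+2)) (hq : q = θ/(θ-2))
    (D : ℝ) (hD : D = ∑ j, (ξ j) ^ (2*q) * (k j) ^ q)
    (cstar : Fin p → ℝ)
    (hc : ∀ i, cstar i = m * ((ξ i) ^ ((θ+2)/(θ-2)) * (k i) ^ (2/(θ-2))) / D) :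
    (∀ c : Fin p → ℝ, (∑ i, ξ i * c i * k i) = m →
        v * ((1/2) * m ^ 2 / D ^ (1/q)) ^ r ≤ ∑ i, v * ((1/2) * (c i) ^ 2 * k i) ^ r) ∧
    ((∑ i, ξ i * cstar i * k i) = m ∧
      (∑ i, v * ((1/2) * (cstar i) ^ 2 * k i) ^ r) = v * ((1/2) * m ^ 2 / D ^ (1/q)) ^ r) := by
  have hθ2 : (0:ℝ) < θ - 2 := by linarith
  have hθ2' : (0:ℝ) < θ + 2 := by linarith
  have hθ0 : (0:ℝ) < θ := by linarith
  have hθm2 : (θ - 2) ≠ 0 := ne_of_gt hθ2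
  have hθp2 : (θ + 2) ≠ 0 := ne_of_gt hθ2'
  have hθne : θ ≠ 0 := ne_of_gt hθ0
  have hr0 : 0 < r := by rw [hr]; positivity
  have hq0 : 0 < q := by rw [hq]; positivity
  have hrne : r ≠ 0 := ne_of_gt hr0
  have hqne : q ≠ 0 := ne_of_gt hq0
  have h2q : (2*q) ≠ 0 := by positivity
  have hD0 : 0 < D := by
    rw [hD]
    obtain ⟨i, hi⟩ := hξ0
    have hξi : 0 < ξ i := lt_of_le_of_ne (hξ i) (Ne.symm hi)
    refine Finset.sum_pos' (fun j _ => mul_nonneg (Real.rpow_nonneg (hξ j) _)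
      (Real.rpow_nonneg (hk j).le _)) ⟨i, Finset.mem_univ i, ?_⟩
    exact mul_pos (Real.rpow_pos_of_pos hξi _) (Real.rpow_pos_of_pos (hk i) _)
  -- square root of k
  set K : Fin p → ℝ := fun i => (k i) ^ ((1:ℝ)/2) with hKdef
  have hK0 : ∀ i, 0 ≤ K i := fun i => Real.rpow_nonneg (hk i).le _
  have hK2 : ∀ i, K i * K i = k i := by
    intro i
    show (k i) ^ ((1:ℝ)/2) * (k i) ^ ((1:ℝ)/2) = k i
    rw [← Real.rpow_add (hk i)]
    norm_num
  have hK2' : ∀ i, (K i)^2 = k i := fun i => by rw [pow_two]; exact hK2 i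
  have hKq : ∀ i, (K i)^(2*q) = (k i)^q := by
    intro i
    show ((k i) ^ ((1:ℝ)/2))^(2*q) = (k i)^q
    rw [← Real.rpow_mul (hk i).le]
    congr 1
    ring
  -- conjugate exponents
  have hpq : Real.HolderConjugate (2*r) (2*q) := by
    rw [Real.holderConjugate_iff]
    constructor
    · rw [hr, mul_div_assoc']
      rw [one_lt_div hθ2']
      linarith
    · rw [hr, hq]
      field_simp
      ring
  -- exponent identities
  have hexp1 : (1:ℝ)/(2*r) * (2*r) = 1 := by field_simp
  have hexp2 : (1:ℝ)/(2*q) * (2*r) = r/q := by field_simp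
  have hexp3 : r/q + 1 = 2*r := by rw [hr, hq]; field_simp; ring
  have hDrq : 0 < D ^ (r/q) := Real.rpow_pos_of_pos hD0 _
  have hD1qr : (D ^ ((1:ℝ)/q)) ^ r = D ^ (r/q) := by
    rw [← Real.rpow_mul hD0.le]
    congr 1
    ring
  constructor
  · -- lower bound
    intro c hcon
    set T := ∑ i, ((c i)^2 * k i) ^ r with hT
    have hTnn : 0 ≤ T :=
      Finset.sum_nonneg fun i _ =>
        Real.rpow_nonneg (mul_nonneg (sq_nonneg _) (hk i).le) r
    have holder := Real.inner_le_Lp_mul_Lq_of_nonneg (s := Finset.univ)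
      (f := fun i => |c i| * K i) (g := fun i => ξ i * K i) hpq
      (fun i _ => mul_nonneg (abs_nonneg _) (hK0 i))
      (fun i _ => mul_nonneg (hξ i) (hK0 i))
    have hE2 : ∑ i, (|c i| * K i) ^ (2*r) = T := by
      refine Finset.sum_congr rfl fun i _ => ?_
      have hx : (0:ℝ) ≤ |c i| * K i := mul_nonneg (abs_nonneg _) (hK0 i)
      rw [Real.rpow_mul hx, show ((2:ℝ)) = ((2:ℕ):ℝ) by norm_num, Real.rpow_natCast,
        mul_pow, sq_abs, hK2' i]
    have hE3 : ∑ i, (ξ i * K i) ^ (2*q) = D := by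
      rw [hD]
      refine Finset.sum_congr rfl fun i _ => ?_
      rw [Real.mul_rpow (hξ i) (hK0 i), hKq i]
    have hmle : m ≤ ∑ i, (|c i| * K i) * (ξ i * K i) := by
      rw [← hcon]
      refine Finset.sum_le_sum fun i _ => ?_
      have h1 : (|c i| * K i) * (ξ i * K i) = ξ i * |c i| * k i := by
        rw [show (|c i| * K i) * (ξ i * K i) = ξ i * |c i| * (K i * K i) by ring, hK2 i]
      rw [h1]
      exact mul_le_mul_of_nonneg_right
        (mul_le_mul_of_nonneg_left (le_abs_self _) (hξ i)) (hk i).le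
    rw [hE2, hE3] at holder
    have hineq : m ≤ T ^ ((1:ℝ)/(2*r)) * D ^ ((1:ℝ)/(2*q)) := le_trans hmle holder
    have hm2r : (m^2) ^ r = m ^ (2*r) := by
      rw [← Real.rpow_natCast m 2, ← Real.rpow_mul hm.le]
      norm_num
    have h2 : m ^ (2*r) ≤ T * D ^ (r/q) := by
      have := Real.rpow_le_rpow hm.le hineq (by positivity : (0:ℝ) ≤ 2*r)
      rwa [Real.mul_rpow (Real.rpow_nonneg hTnn _) (Real.rpow_nonneg hD0.le _),
        ← Real.rpow_mul hTnn, ← Real.rpow_mul hD0.le, hexp1, hexp2, Real.rpow_one] at this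
    have hkey : m ^ (2*r) / D ^ (r/q) ≤ T := by
      rw [div_le_iff₀ hDrq]; exact h2
    have hRHS : ∑ i, v * ((1/2) * (c i)^2 * k i) ^ r = v * ((1/2:ℝ)) ^ r * T := by
      rw [hT, Finset.mul_sum]
      refine Finset.sum_congr rfl fun i _ => ?_
      rw [mul_assoc ((1:ℝ)/2),
        Real.mul_rpow (by norm_num) (mul_nonneg (sq_nonneg _) (hk i).le), ← mul_assoc]
    have hLHS : v * ((1/2) * m ^ 2 / D ^ (1/q)) ^ r
        = v * ((1/2:ℝ)) ^ r * (m ^ (2*r) / D ^ (r/q)) := by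
      rw [show (1/2) * m^2 / D^(1/q) = (1/2) * (m^2 / D^(1/q)) from mul_div_assoc _ _ _,
        Real.mul_rpow (by norm_num)
          (div_nonneg (sq_nonneg m) (Real.rpow_nonneg hD0.le _)),
        Real.div_rpow (sq_nonneg m) (Real.rpow_nonneg hD0.le _), hm2r, hD1qr, mul_assoc]
    rw [hRHS, hLHS]
    exact mul_le_mul_of_nonneg_left hkey (by positivity)
  constructor
  · -- constraint at cstar
    have hterm : ∀ i, ξ i * cstar i * k i = (m/D) * ((ξ i)^(2*q) * (k i)^q) := by
      intro i
      rw [hc i]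
      rcases eq_or_lt_of_le (hξ i) with h0 | hpos
      · rw [← h0, Real.zero_rpow h2q]
        ring
      · have e1 : ξ i * (ξ i)^((θ+2)/(θ-2)) = (ξ i)^(2*q) := by
          rw [show (2*q) = 1 + (θ+2)/(θ-2) by rw [hq]; field_simp; ring,
            Real.rpow_add hpos, Real.rpow_one]
        have e2 : k i * (k i)^(2/(θ-2)) = (k i)^q := by
          rw [show q = 1 + 2/(θ-2) by rw [hq]; field_simp; ring,
            Real.rpow_add (hk i), Real.rpow_one]
        calc ξ i * (m * ((ξ i)^((θ+2)/(θ-2)) * (k i)^(2/(θ-2))) / D) * k i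
            = (m/D) * ((ξ i * (ξ i)^((θ+2)/(θ-2))) * (k i * (k i)^(2/(θ-2)))) := by ring
          _ = (m/D) * ((ξ i)^(2*q) * (k i)^q) := by rw [e1, e2]
    calc ∑ i, ξ i * cstar i * k i = ∑ i, (m/D) * ((ξ i)^(2*q) * (k i)^q) :=
          Finset.sum_congr rfl fun i _ => hterm i
      _ = (m/D) * D := by rw [← Finset.mul_sum, ← hD]
      _ = m := div_mul_cancel₀ m (ne_of_gt hD0)
  · -- objective value at cstar
    set X : ℝ := (1/2) * m^2 with hX
    have hX0 : 0 < X := by positivity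
    have hterm : ∀ i, v * ((1/2) * (cstar i)^2 * k i) ^ r
        = v * (X / D^2) ^ r * ((ξ i)^(2*q) * (k i)^q) := by
      intro i
      rw [hc i]
      rcases eq_or_lt_of_le (hξ i) with h0 | hpos
      · rw [← h0, Real.zero_rpow (div_ne_zero hθp2 hθm2), Real.zero_rpow h2q]
        simp [Real.zero_rpow hrne]
      · have key : (1/2) * (m * ((ξ i)^((θ+2)/(θ-2)) * (k i)^(2/(θ-2))) / D)^2 * k i
            = (X / D^2) * ((ξ i)^(2*((θ+2)/(θ-2))) * (k i)^(2*(2/(θ-2)) + 1)) := by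
          rw [hX]
          rw [show 2*((θ+2)/(θ-2)) = (θ+2)/(θ-2) + (θ+2)/(θ-2) by ring,
            show 2*(2/(θ-2)) + 1 = 2/(θ-2) + (2/(θ-2) + 1) by ring,
            Real.rpow_add hpos, Real.rpow_add (hk i), Real.rpow_add (hk i),
            Real.rpow_one]
          field_simp
        rw [key]
        have hx1 : (0:ℝ) ≤ X / D^2 := by positivity
        have hx2 : (0:ℝ) ≤ (ξ i)^(2*((θ+2)/(θ-2))) := Real.rpow_nonneg (hξ i) _
        have hx3 : (0:ℝ) ≤ (k i)^(2*(2/(θ-2)) + 1) := Real.rpow_nonneg (hk i).le _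
        rw [Real.mul_rpow hx1 (mul_nonneg hx2 hx3), Real.mul_rpow hx2 hx3,
          ← Real.rpow_mul (hξ i), ← Real.rpow_mul (hk i).le]
        rw [show 2*((θ+2)/(θ-2)) * r = 2*q by rw [hr, hq]; field_simp,
          show (2*(2/(θ-2)) + 1) * r = q by rw [hr, hq]; field_simp; ring]
        ring
    have hsum : ∑ i, v * ((1/2) * (cstar i)^2 * k i) ^ r = v * (X / D^2) ^ r * D := by
      calc ∑ i, v * ((1/2) * (cstar i)^2 * k i) ^ r
          = ∑ i, v * (X / D^2) ^ r * ((ξ i)^(2*q) * (k i)^q) :=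
            Finset.sum_congr rfl fun i _ => hterm i
        _ = v * (X / D^2) ^ r * D := by rw [← Finset.mul_sum, ← hD]
    rw [hsum]
    have hD2r : (D^2) ^ r = D ^ (2*r) := by
      rw [← Real.rpow_natCast D 2, ← Real.rpow_mul hD0.le]
      norm_num
    have hfin : (X / D^2) ^ r * D = (X / D ^ ((1:ℝ)/q)) ^ r := by
      rw [Real.div_rpow hX0.le (by positivity), Real.div_rpow hX0.le
        (Real.rpow_nonneg hD0.le _), hD2r, hD1qr,
        show 2*r = r/q + 1 from hexp3.symm, Real.rpow_add hD0, Real.rpow_one]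
      field_simp
    rw [mul_assoc, hfin, hX]
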